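/- Let Z^T ∈ R^{k×m} have orthonormal rows, let A ∈ R^{n×m}, and let P = Z Z^T be the projection onto the row span of Z^T. For any rank-k matrix M* minimizing ‖M Z^T − A‖_F over rank-k M, we have ‖M* Z^T − A‖_F^2 ≤ ‖A − A_k‖_F^2 + k·‖A(I − Z Z^T)‖_2^2. -/

import Mathlib

open Matrix

/-- Squared Frobenius norm of a matrix. -/
noncomputable def frobSq {n m : ℕ} (A : Matrix (Fin n) (Fin m) ℝ) : ℝ :=
  ∑ i, ∑ j, (A i j) ^ 2

/-- Spectral (operator) norm of a matrix. -/
noncomputable def spec {n m : ℕ} (A : Matrix (Fin n) (Fin m) ℝ) : ℝ :=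
  ‖LinearMap.toContinuousLinearMap (Matrix.toEuclideanLin A)‖


noncomputable def minner {n m : ℕ} (X Y : Matrix (Fin n) (Fin m) ℝ) : ℝ :=
  ∑ i, ∑ j, X i j * Y i j

lemma frobSq_nonneg {n m : ℕ} (X : Matrix (Fin n) (Fin m) ℝ) : 0 ≤ frobSq X := by
  apply Finset.sum_nonneg; intro i _; apply Finset.sum_nonneg; intro j _; positivity

lemma frobSq_sub {n m : ℕ} (X Y : Matrix (Fin n) (Fin m) ℝ) :
    frobSq (X - Y) = frobSq X - 2 * minner X Y + frobSq Y := by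
  simp only [frobSq, minner, ← Finset.sum_add_distrib, ← Finset.sum_sub_distrib, Finset.mul_sum]
  refine Finset.sum_congr rfl fun i _ => Finset.sum_congr rfl fun j _ => ?_
  simp [Matrix.sub_apply]; ring

lemma frobSq_sub_comm {n m : ℕ} (X Y : Matrix (Fin n) (Fin m) ℝ) :
    frobSq (X - Y) = frobSq (Y - X) := by
  simp only [frobSq]
  refine Finset.sum_congr rfl fun i _ => Finset.sum_congr rfl fun j _ => ?_
  simp [Matrix.sub_apply]; ring

lemma minner_smul {n m : ℕ} (X B : Matrix (Fin n) (Fin m) ℝ) (s : ℝ) :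
    minner X (s • B) = s * minner X B := by
  simp only [minner, Finset.mul_sum]
  refine Finset.sum_congr rfl fun i _ => Finset.sum_congr rfl fun j _ => ?_
  simp [Matrix.smul_apply]; ring

lemma frobSq_smul {n m : ℕ} (B : Matrix (Fin n) (Fin m) ℝ) (s : ℝ) :
    frobSq (s • B) = s ^ 2 * frobSq B := by
  simp only [frobSq, Finset.mul_sum]
  refine Finset.sum_congr rfl fun i _ => Finset.sum_congr rfl fun j _ => ?_
  simp [Matrix.smul_apply]; ring

lemma minner_cauchy {n m : ℕ} (X Y : Matrix (Fin n) (Fin m) ℝ) :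
    minner X Y ^ 2 ≤ frobSq X * frobSq Y := by
  have h := Finset.sum_mul_sq_le_sq_mul_sq (Finset.univ : Finset (Fin n × Fin m))
    (fun p => X p.1 p.2) (fun p => Y p.1 p.2)
  simpa [minner, frobSq, Fintype.sum_prod_type] using h

lemma variational {n m : ℕ} (X B : Matrix (Fin n) (Fin m) ℝ)
    (h : ∀ s : ℝ, frobSq X ≤ frobSq (X - s • B)) : minner X B = 0 := by
  set c := minner X B with hc
  set F := frobSq B with hF
  have hexp : ∀ s : ℝ, 0 ≤ -2 * (s * c) + s ^ 2 * F := by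
    intro s
    have := h s
    rw [frobSq_sub, minner_smul, frobSq_smul] at this
    linarith
  have hF0 : 0 ≤ F := frobSq_nonneg B
  rcases eq_or_lt_of_le hF0 with h0 | hpos
  · have hcs := minner_cauchy X B
    rw [← hF, ← hc, ← h0] at hcs
    have hX := frobSq_nonneg X
    nlinarith
  · have h1 := hexp (c / F)
    have hdc : (c / F) * F = c := div_mul_cancel₀ c hpos.ne'
    have hsq : c ^ 2 ≤ 0 := by nlinarith [h1, hdc, hpos]
    nlinarith [sq_nonneg c]

lemma orthonormal_expand {n r : ℕ} (u : Fin r → Fin n → ℝ)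
    (hu : ∀ i i', ∑ a, u i a * u i' a = if i = i' then 1 else 0) (g : Fin r → ℝ) :
    ∑ a, (∑ i, u i a * g i) ^ 2 = ∑ i, g i ^ 2 := by
  calc ∑ a, (∑ i, u i a * g i) ^ 2
      = ∑ a, ∑ i, ∑ i', (u i a * g i) * (u i' a * g i') := by
        refine Finset.sum_congr rfl fun a _ => ?_
        rw [sq, Finset.sum_mul_sum]
    _ = ∑ i, ∑ i', (g i * g i') * ∑ a, u i a * u i' a := by
        rw [Finset.sum_comm]
        refine Finset.sum_congr rfl fun i _ => ?_
        rw [Finset.sum_comm]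
        refine Finset.sum_congr rfl fun i' _ => ?_
        rw [Finset.mul_sum]
        exact Finset.sum_congr rfl fun a _ => by ring
    _ = ∑ i, g i ^ 2 := by
        simp_rw [hu]
        simp [mul_ite, Finset.sum_ite_eq', sq]

lemma spec_nonneg {n m : ℕ} (C : Matrix (Fin n) (Fin m) ℝ) : 0 ≤ spec C := norm_nonneg _

lemma spec_mulVec {n m : ℕ} (C : Matrix (Fin n) (Fin m) ℝ) (x : Fin m → ℝ) :
    ∑ i, (C *ᵥ x) i ^ 2 ≤ spec C ^ 2 * ∑ j, x j ^ 2 := by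
  have h := (LinearMap.toContinuousLinearMap (Matrix.toEuclideanLin C)).le_opNorm
      ((WithLp.equiv 2 (Fin m → ℝ)).symm x)
  have hnx : ‖(WithLp.equiv 2 (Fin m → ℝ)).symm x‖ = Real.sqrt (∑ j, x j ^ 2) := by
    rw [EuclideanSpace.norm_eq]; congr 1
    exact Finset.sum_congr rfl fun j _ => by
      show ‖x j‖ ^ 2 = x j ^ 2
      rw [Real.norm_eq_abs, sq_abs]
  have hny : ‖(LinearMap.toContinuousLinearMap (Matrix.toEuclideanLin C))
      ((WithLp.equiv 2 (Fin m → ℝ)).symm x)‖ = Real.sqrt (∑ i, (C *ᵥ x) i ^ 2) := by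
    rw [show (LinearMap.toContinuousLinearMap (Matrix.toEuclideanLin C))
        ((WithLp.equiv 2 (Fin m → ℝ)).symm x) = (WithLp.equiv 2 (Fin n → ℝ)).symm (C *ᵥ x) from rfl]
    rw [EuclideanSpace.norm_eq]; congr 1
    exact Finset.sum_congr rfl fun i _ => by
      show ‖(C *ᵥ x) i‖ ^ 2 = (C *ᵥ x) i ^ 2
      rw [Real.norm_eq_abs, sq_abs]
  rw [hnx, hny] at h
  have h1 : (0:ℝ) ≤ ∑ i, (C *ᵥ x) i ^ 2 := by positivity
  have h2 : (0:ℝ) ≤ ∑ j, x j ^ 2 := by positivity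
  have hs : spec C = ‖LinearMap.toContinuousLinearMap (Matrix.toEuclideanLin C)‖ := rfl
  rw [hs]
  nlinarith [Real.sq_sqrt h1, Real.sq_sqrt h2, Real.sqrt_nonneg (∑ i, (C *ᵥ x) i ^ 2),
    Real.sqrt_nonneg (∑ j, x j ^ 2),
    norm_nonneg (LinearMap.toContinuousLinearMap (Matrix.toEuclideanLin C)), h]

lemma spec_vecMul {n m : ℕ} (C : Matrix (Fin n) (Fin m) ℝ) (v : Fin n → ℝ) :
    ∑ j, (v ᵥ* C) j ^ 2 ≤ spec C ^ 2 * ∑ i, v i ^ 2 := by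
  set w : Fin m → ℝ := v ᵥ* C with hw
  set S : ℝ := ∑ j, w j ^ 2 with hS
  have key : S = ∑ i, v i * (C *ᵥ w) i := by
    have step : ∀ j, w j ^ 2 = ∑ i, v i * (C i j * w j) := by
      intro j
      rw [sq]
      conv_lhs => rw [show w j = ∑ i, v i * C i j from rfl]
      rw [Finset.sum_mul]
      exact Finset.sum_congr rfl fun i _ => mul_assoc _ _ _
    calc S = ∑ j, ∑ i, v i * (C i j * w j) := Finset.sum_congr rfl fun j _ => step j
    _ = ∑ i, ∑ j, v i * (C i j * w j) := by rw [Finset.sum_comm]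
    _ = ∑ i, v i * (C *ᵥ w) i := Finset.sum_congr rfl fun i _ => by
        rw [← Finset.mul_sum]; rfl
  have hcs := Finset.sum_mul_sq_le_sq_mul_sq (Finset.univ : Finset (Fin n))
    v (fun i => (C *ᵥ w) i)
  rw [← key] at hcs
  have hCw := spec_mulVec C w
  have hS0 : 0 ≤ S := by positivity
  have hv0 : (0:ℝ) ≤ ∑ i, v i ^ 2 := by positivity
  rcases eq_or_lt_of_le hS0 with h0 | hpos
  · rw [← h0]; positivity
  · have : S ^ 2 ≤ (∑ i, v i ^ 2) * (spec C ^ 2 * S) := by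
      calc S ^ 2 ≤ (∑ i, v i ^ 2) * (∑ i, (C *ᵥ w) i ^ 2) := hcs
      _ ≤ (∑ i, v i ^ 2) * (spec C ^ 2 * S) := by
          exact mul_le_mul_of_nonneg_left hCw hv0
    nlinarith [this, hpos]

lemma exists_onb {n : ℕ} (V0 : Submodule ℝ (Fin n → ℝ)) :
    ∃ (r : ℕ) (u : Fin r → Fin n → ℝ),
      r = Module.finrank ℝ V0 ∧
      (∀ i, u i ∈ V0) ∧
      (∀ i i', ∑ a, u i a * u i' a = if i = i' then 1 else 0) ∧
      (∀ x ∈ V0, x = ∑ i, (∑ t, u i t * x t) • u i) := by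
  classical
  let e : (Fin n → ℝ) ≃ₗ[ℝ] EuclideanSpace ℝ (Fin n) :=
    (WithLp.linearEquiv 2 ℝ (Fin n → ℝ)).symm
  let V : Submodule ℝ (EuclideanSpace ℝ (Fin n)) := V0.map (e : (Fin n → ℝ) →ₗ[ℝ] EuclideanSpace ℝ (Fin n))
  let b := stdOrthonormalBasis ℝ V
  refine ⟨Module.finrank ℝ V, fun i => e.symm ((b i : EuclideanSpace ℝ (Fin n))), ?_, ?_, ?_, ?_⟩
  · exact LinearEquiv.finrank_map_eq e V0
  · intro i
    obtain ⟨x, hx, hxe⟩ := (b i).2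
    show e.symm _ ∈ V0
    rw [← hxe, LinearEquiv.coe_coe, LinearEquiv.symm_apply_apply]
    exact hx
  · intro i i'
    have horth := b.orthonormal
    have h1 : (inner ℝ (b i) (b i') : ℝ) = if i = i' then 1 else 0 := by
      rcases eq_or_ne i i' with rfl | hne
      · rw [real_inner_self_eq_norm_sq, horth.1 i]; norm_num
      · simp [hne, horth.2 hne]
    rw [Submodule.coe_inner, PiLp.inner_apply] at h1
    simp only [RCLike.inner_apply, conj_trivial] at h1
    rw [← h1]
    exact Finset.sum_congr rfl fun t _ => mul_comm _ _
  · intro x hx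
    have hxV : e x ∈ V := ⟨x, hx, rfl⟩
    have h := b.sum_repr ⟨e x, hxV⟩
    have hco : (((∑ i, b.repr ⟨e x, hxV⟩ i • b i : V)) : EuclideanSpace ℝ (Fin n)) = e x := by
      rw [h]
    rw [Submodule.coe_sum] at hco
    have h2 := congrArg e.symm hco
    rw [map_sum] at h2
    simp only [LinearEquiv.symm_apply_apply] at h2
    have hci : ∀ i, b.repr ⟨e x, hxV⟩ i
        = ∑ t, (e.symm ((b i : EuclideanSpace ℝ (Fin n)))) t * x t := by
      intro i
      rw [b.repr_apply_apply, Submodule.coe_inner, PiLp.inner_apply]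
      simp [RCLike.inner_apply]
      exact Finset.sum_congr rfl fun t _ => mul_comm _ _
    calc x = ∑ i, e.symm ((b.repr ⟨e x, hxV⟩ i • b i : V) : EuclideanSpace ℝ (Fin n)) := h2.symm
    _ = ∑ i, (∑ t, (e.symm ((b i : EuclideanSpace ℝ (Fin n)))) t * x t) •
          e.symm ((b i : EuclideanSpace ℝ (Fin n))) := by
        refine Finset.sum_congr rfl fun i _ => ?_
        rw [Submodule.coe_smul, _root_.map_smul, hci i]

/-- For `Z` with orthonormal columns, the best rank-`k` `M*` for `‖M Zᵀ - A‖_F` satisfies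
`‖M* Zᵀ - A‖_F² ≤ ‖A - A_k‖_F² + k·‖A(I - ZZᵀ)‖₂²`. -/
theorem lowrank_in_span_bound {n m k : ℕ}
    (A Ak : Matrix (Fin n) (Fin m) ℝ) (Z : Matrix (Fin m) (Fin k) ℝ)
    (hZ : Zᵀ * Z = 1)
    (hAkrank : Ak.rank ≤ k)
    (hAkbest : ∀ D : Matrix (Fin n) (Fin m) ℝ, D.rank ≤ k →
      frobSq (A - Ak) ≤ frobSq (A - D))
    (Mstar : Matrix (Fin n) (Fin k) ℝ)
    (hMrank : Mstar.rank ≤ k)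
    (hMbest : ∀ M : Matrix (Fin n) (Fin k) ℝ, M.rank ≤ k →
      frobSq (Mstar * Zᵀ - A) ≤ frobSq (M * Zᵀ - A)) :
    frobSq (Mstar * Zᵀ - A)
      ≤ frobSq (A - Ak) + (k : ℝ) * spec (A * (1 - Z * Zᵀ)) ^ 2 := by
  classical
  set V0 : Submodule ℝ (Fin n → ℝ) := Submodule.span ℝ (Set.range Akᵀ) with hV0
  obtain ⟨r, u, hrV, huV0, honu, hrepr⟩ := exists_onb V0
  have hfr : Module.finrank ℝ V0 = Ak.rank := (Matrix.rank_eq_finrank_span_cols Ak).symm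
  have hrk : r ≤ k := by rw [hrV, hfr]; exact hAkrank
  have hcol : ∀ j, (fun a => Ak a j) ∈ V0 := fun j => Submodule.subset_span ⟨j, rfl⟩
  have hrank_le : ∀ (M : Matrix (Fin n) (Fin m) ℝ),
      (∀ j, (fun a => M a j) ∈ V0) → M.rank ≤ k := by
    intro M hM
    rw [Matrix.rank_eq_finrank_span_cols]
    have hle : Submodule.span ℝ (Set.range Mᵀ) ≤ V0 := by
      rw [Submodule.span_le]
      rintro _ ⟨j, rfl⟩
      exact hM j
    calc Module.finrank ℝ (Submodule.span ℝ (Set.range Mᵀ)) ≤ Module.finrank ℝ V0 :=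
          Submodule.finrank_mono hle
    _ = Ak.rank := hfr
    _ ≤ k := hAkrank
  -- perpendicularity of the residual to the column space
  have hperp : ∀ (i : Fin r) (j' : Fin m), ∑ a, u i a * (A - Ak) a j' = 0 := by
    intro i j'
    have hvar : minner (A - Ak) (vecMulVec (u i) (Pi.single j' 1)) = 0 := by
      apply variational
      intro s
      have hD : (Ak + s • vecMulVec (u i) (Pi.single j' 1)).rank ≤ k := by
        apply hrank_le
        intro j
        have hcoleq : (fun a => (Ak + s • vecMulVec (u i) (Pi.single j' 1)) a j)
            = (fun a => Ak a j) + (s * ((Pi.single j' (1:ℝ) : Fin m → ℝ) j)) • u i := by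
          funext a
          simp [Matrix.add_apply, Matrix.smul_apply, vecMulVec_apply]
          ring
        rw [hcoleq]
        exact V0.add_mem (hcol j) (V0.smul_mem _ (huV0 i))
      have h := hAkbest _ hD
      have heq : A - (Ak + s • vecMulVec (u i) (Pi.single j' 1))
          = (A - Ak) - s • vecMulVec (u i) (Pi.single j' 1) := by
        rw [sub_add_eq_sub_sub]
      rw [heq] at h
      exact h
    have hexpand : minner (A - Ak) (vecMulVec (u i) (Pi.single j' 1))
        = ∑ a, (A - Ak) a j' * u i a := by
      simp [minner, vecMulVec_apply, Pi.single_apply, mul_ite, mul_one, mul_zero,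
        Finset.sum_ite_eq', mul_comm]
    rw [hexpand] at hvar
    rw [← hvar]
    exact Finset.sum_congr rfl fun a _ => mul_comm _ _
  set P1 : Matrix (Fin m) (Fin m) ℝ := 1 - Z * Zᵀ with hP1
  set C : Matrix (Fin n) (Fin m) ℝ := A * P1 with hCdef
  set w : Fin r → Fin m → ℝ := fun i => u i ᵥ* A with hwdef
  set g : Fin r → Fin m → ℝ := fun i => u i ᵥ* C with hgdef
  -- Ak entries in terms of the orthonormal family
  have hAk_entry : ∀ a j, Ak a j = ∑ i, w i j * u i a := by
    intro a j
    have h1 := hrepr _ (hcol j)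
    have h2 := congrFun h1 a
    rw [Finset.sum_apply] at h2
    have h3 : ∀ i : Fin r, ∑ t, u i t * Ak t j = w i j := by
      intro i
      have hp := hperp i j
      have hsub : ∑ t, (u i t * A t j - u i t * Ak t j) = 0 := by
        rw [← hp]
        exact Finset.sum_congr rfl fun t _ => by rw [Matrix.sub_apply]; ring
      rw [Finset.sum_sub_distrib] at hsub
      have : ∑ t, u i t * Ak t j = ∑ t, u i t * A t j := by linarith
      rw [this]
      rfl
    calc Ak a j = ∑ i, (∑ t, u i t * Ak t j) • u i a := h2
    _ = ∑ i, w i j * u i a := Finset.sum_congr rfl fun i _ => by rw [h3 i]; rfl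
  have hgw : ∀ i : Fin r, g i = w i ᵥ* P1 := by
    intro i
    rw [hgdef, hCdef, Matrix.vecMul_vecMul]
  have hAkC_entry : ∀ (a : Fin n) (j : Fin m),
      (Ak * P1 : Matrix (Fin n) (Fin m) ℝ) a j = ∑ i, u i a * g i j := by
    intro a j
    rw [Matrix.mul_apply]
    calc ∑ c, Ak a c * P1 c j
        = ∑ c, (∑ i, w i c * u i a) * P1 c j :=
          Finset.sum_congr rfl fun c _ => by rw [← hAk_entry a c]
    _ = ∑ c, ∑ i, u i a * (w i c * P1 c j) := by
          refine Finset.sum_congr rfl fun c _ => ?_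
          rw [Finset.sum_mul]
          exact Finset.sum_congr rfl fun i _ => by ring
    _ = ∑ i, ∑ c, u i a * (w i c * P1 c j) := by rw [Finset.sum_comm]
    _ = ∑ i, u i a * g i j := by
          refine Finset.sum_congr rfl fun i _ => ?_
          rw [← Finset.mul_sum, hgw i]
          rfl
  -- cross term vanishes
  have hcross : minner (Ak - A) (Ak * P1) = 0 := by
    calc minner (Ak - A) (Ak * P1)
        = ∑ a, ∑ j, (Ak - A) a j * ∑ i, u i a * g i j := by
          refine Finset.sum_congr rfl fun a _ => Finset.sum_congr rfl fun j _ => ?_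
          rw [hAkC_entry a j]
    _ = ∑ a, ∑ j, ∑ i, g i j * (u i a * (Ak - A) a j) := by
          refine Finset.sum_congr rfl fun a _ => Finset.sum_congr rfl fun j _ => ?_
          rw [Finset.mul_sum]
          exact Finset.sum_congr rfl fun i _ => by ring
    _ = ∑ j, ∑ a, ∑ i, g i j * (u i a * (Ak - A) a j) := by rw [Finset.sum_comm]
    _ = ∑ j, ∑ i, ∑ a, g i j * (u i a * (Ak - A) a j) := by
          exact Finset.sum_congr rfl fun j _ => by rw [Finset.sum_comm]
    _ = ∑ i, ∑ j, ∑ a, g i j * (u i a * (Ak - A) a j) := by rw [Finset.sum_comm]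
    _ = ∑ i, ∑ j, g i j * ∑ a, u i a * (Ak - A) a j := by
          exact Finset.sum_congr rfl fun i _ => Finset.sum_congr rfl fun j _ => by
            rw [Finset.mul_sum]
    _ = 0 := by
          refine Finset.sum_eq_zero fun i _ => Finset.sum_eq_zero fun j _ => ?_
          have : ∑ a, u i a * (Ak - A) a j = 0 := by
            have hp := hperp i j
            rw [← neg_eq_zero, ← Finset.sum_neg_distrib]
            rw [← hp]
            exact Finset.sum_congr rfl fun a _ => by
              rw [Matrix.sub_apply, Matrix.sub_apply]; ring
          rw [this, mul_zero]
  -- spectral bound on the projected part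
  have hfrC : frobSq (Ak * P1) ≤ (k : ℝ) * spec C ^ 2 := by
    have he : frobSq (Ak * P1) = ∑ i, ∑ j, g i j ^ 2 := by
      calc frobSq (Ak * P1)
          = ∑ a, ∑ j, (∑ i, u i a * g i j) ^ 2 := by
            simp only [frobSq]
            exact Finset.sum_congr rfl fun a _ => Finset.sum_congr rfl fun j _ => by
              rw [hAkC_entry a j]
      _ = ∑ j, ∑ a, (∑ i, u i a * g i j) ^ 2 := by rw [Finset.sum_comm]
      _ = ∑ j, ∑ i, g i j ^ 2 := Finset.sum_congr rfl fun j _ =>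
            orthonormal_expand u honu (fun i => g i j)
      _ = ∑ i, ∑ j, g i j ^ 2 := by rw [Finset.sum_comm]
    rw [he]
    have hstep : ∀ i : Fin r, ∑ j, g i j ^ 2 ≤ spec C ^ 2 := by
      intro i
      have hsv := spec_vecMul C (u i)
      have h1 : ∑ a, u i a ^ 2 = 1 := by
        have h := honu i i
        simp only [eq_self_iff_true, if_true] at h
        rw [← h]
        exact Finset.sum_congr rfl fun a _ => sq (u i a)
      rw [h1, mul_one] at hsv
      exact hsv
    calc ∑ i, ∑ j, g i j ^ 2 ≤ ∑ _i : Fin r, spec C ^ 2 :=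
          Finset.sum_le_sum fun i _ => hstep i
    _ = (r : ℝ) * spec C ^ 2 := by simp [Finset.sum_const, nsmul_eq_mul]
    _ ≤ (k : ℝ) * spec C ^ 2 :=
          mul_le_mul_of_nonneg_right (Nat.cast_le.2 hrk) (sq_nonneg _)
  -- putting it together
  have hmain := hMbest (Ak * Z) ((Matrix.rank_mul_le_left Ak Z).trans hAkrank)
  have hsplit : Ak * Z * Zᵀ - A = (Ak - A) - Ak * P1 := by
    rw [hP1, Matrix.mul_sub, Matrix.mul_one, Matrix.mul_assoc]
    abel
  calc frobSq (Mstar * Zᵀ - A) ≤ frobSq (Ak * Z * Zᵀ - A) := hmain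
  _ = frobSq ((Ak - A) - Ak * P1) := by rw [hsplit]
  _ = frobSq (Ak - A) - 2 * minner (Ak - A) (Ak * P1)
        + frobSq (Ak * P1) := frobSq_sub _ _
  _ = frobSq (A - Ak) + frobSq (Ak * P1) := by
        rw [hcross, frobSq_sub_comm (Ak) A]; ring
  _ ≤ frobSq (A - Ak) + (k : ℝ) * spec C ^ 2 := by linarith [hfrC]
  _ = frobSq (A - Ak) + (k : ℝ) * spec (A * (1 - Z * Zᵀ)) ^ 2 := by rw [hCdef, hP1]
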